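/- arXiv:1310.1598 — 6 statements merged into one kernel-verified Lean document; each statement's English description precedes it below -/
import Mathlib

section
/- Let K be an infinite field, let n ≥ 2, and let p be a polynomial in m noncommuting variables over K. Suppose p has an evaluation of degree n on the n×n matrices, i.e., there exist matrices b_1,…,b_m ∈ M_n(K) such that the minimal polynomial of p(b_1,…,b_m) has degree n. Then there exist an index i with 1 ≤ i ≤ m and matrices a_1,…,a_m, a_i' ∈ M_n(K) such that the two values p(a_1,…,a_{i-1},a_i,a_{i+1},…,a_m) and p(a_1,…,a_{i-1},a_i',a_{i+1},…,a_m) do not commute. -/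
/-- Evaluation of a noncommutative polynomial `p ∈ K⟨x_1,…,x_m⟩` at matrices
`a_1,…,a_m ∈ M_n(K)`: the image of `p` under the unique `K`-algebra homomorphism
sending `x_i` to `a_i`. -/
noncomputable def ncEval {K : Type*} [Field K] {m n : ℕ}
    (p : FreeAlgebra K (Fin m)) (a : Fin m → Matrix (Fin n) (Fin n) K) :
    Matrix (Fin n) (Fin n) K :=
  FreeAlgebra.lift K a p

/-!
A matrix `M` whose minimal polynomial has degree `n` has a cyclic vector `v`: the Krylov matrix
with columns `v, M v, …, M^(n-1) v` is invertible. Then every matrix commuting with `M` is a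
polynomial in `M`, so the centralizer of `M` is commutative.

Suppose any two values of `p` whose arguments differ in one place commute, and let `A = p(b)`
have a cyclic vector `v`. Pass from `b` to `u b u⁻¹`, with `u = 1 + tE` and `E² = 0`, by changing
one argument at a time. The Krylov determinants of the intermediate values are polynomials in `t`
that do not vanish at `t = 0`, so for all but finitely many `t` every intermediate value has
commutative centralizer, and commutation propagates along the chain: `A` commutes with
`p(u b u⁻¹) = u A u⁻¹`. For `E` of rank one sending `A v ↦ v` and `v ↦ 0` this fails whenever
`t ≠ 0` and `t` is not the coefficient of `v` in `E (A² v)`.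
-/

open Polynomial Matrix Filter UniqueFactorizationMonoid

section Krylov

variable {R : Type*} [CommRing R] {n : ℕ}

def krylov (M : Matrix (Fin n) (Fin n) R) (v : Fin n → R) : Matrix (Fin n) (Fin n) R :=
  Matrix.of fun i k => (M ^ (k : ℕ) *ᵥ v) i

lemma krylov_map {S : Type*} [CommRing S] (f : R →+* S) (M : Matrix (Fin n) (Fin n) R)
    (v : Fin n → R) : (krylov M v).map f = krylov (M.map f) (f ∘ v) := by
  ext i k
  simp [krylov, RingHom.map_mulVec, ← RingHom.mapMatrix_apply, map_pow]

lemma krylov_mulVec (M : Matrix (Fin n) (Fin n) R) (v c : Fin n → R) :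
    krylov M v *ᵥ c = aeval M ((degreeLTEquiv R n).symm c : R[X]) *ᵥ v := by
  change _ = aeval M (∑ k : Fin n, monomial k (c k)) *ᵥ v
  simp only [map_sum, aeval_monomial, ← Algebra.smul_def, sum_mulVec, smul_mulVec]
  ext i
  simp [krylov, mulVec, dotProduct, mul_comm]

lemma inv_krylov_mulVec_pow {M : Matrix (Fin n) (Fin n) R} {v : Fin n → R}
    (hv : IsUnit (krylov M v).det) (k : Fin n) :
    (krylov M v)⁻¹ *ᵥ (M ^ (k : ℕ) *ᵥ v) = Pi.single k 1 := by
  have hcol : krylov M v *ᵥ Pi.single k 1 = M ^ (k : ℕ) *ᵥ v := by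
    ext i
    simp [krylov]
  rw [← hcol, mulVec_mulVec, nonsing_inv_mul _ hv, one_mulVec]

lemma mul_krylov_of_commute {M B : Matrix (Fin n) (Fin n) R} (h : Commute B M)
    (v : Fin n → R) : B * krylov M v = krylov M (B *ᵥ v) := by
  ext i k
  change (B *ᵥ (M ^ (k : ℕ) *ᵥ v)) i = _
  rw [mulVec_mulVec, (h.pow_right k).eq, ← mulVec_mulVec]
  rfl

lemma exists_eq_aeval_of_commute {M B : Matrix (Fin n) (Fin n) R} {v : Fin n → R}
    (hv : IsUnit (krylov M v).det) (hB : Commute B M) : ∃ q : R[X], B = aeval M q := by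
  set q : R[X] := ((degreeLTEquiv R n).symm ((krylov M v)⁻¹ *ᵥ (B *ᵥ v)) : R[X])
  have hqv : aeval M q *ᵥ v = B *ᵥ v := by
    rw [← krylov_mulVec, mulVec_mulVec, mul_nonsing_inv _ hv, one_mulVec]
  have hq : Commute (aeval M q) M := by simpa using ((commute_X q).map (aeval M)).symm
  refine ⟨q, ((isUnit_iff_isUnit_det _).mpr hv).mul_left_injective ?_⟩
  change B * krylov M v = aeval M q * krylov M v
  rw [mul_krylov_of_commute hB, mul_krylov_of_commute hq, hqv]

lemma Commute.of_isUnit_det_krylov {M B C : Matrix (Fin n) (Fin n) R} {v : Fin n → R}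
    (hv : IsUnit (krylov M v).det) (hB : Commute B M) (hC : Commute C M) : Commute B C := by
  obtain ⟨q, rfl⟩ := exists_eq_aeval_of_commute hv hB
  obtain ⟨r, rfl⟩ := exists_eq_aeval_of_commute hv hC
  exact (Commute.all q r).map (aeval M)

lemma commute_zero_of_commute_succ {Y : ℕ → Matrix (Fin n) (Fin n) R} {m : ℕ}
    (hcyc : ∀ k < m, ∃ v, IsUnit (krylov (Y k) v).det)
    (hstep : ∀ k < m, Commute (Y k) (Y (k + 1))) : Commute (Y 0) (Y m) := by
  induction m with
  | zero => exact Commute.refl _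
  | succ m ih =>
    obtain ⟨v, hv⟩ := hcyc m m.lt_succ_self
    exact (ih (fun k hk => hcyc k (by omega)) (fun k hk => hstep k (by omega))).of_isUnit_det_krylov
      hv (hstep m m.lt_succ_self).symm

lemma aeval_mulVec_eq_zero_of_dvd {M : Matrix (Fin n) (Fin n) R} {v : Fin n → R} {q r : R[X]}
    (h : q ∣ r) (hq : aeval M q *ᵥ v = 0) : aeval M r *ᵥ v = 0 := by
  obtain ⟨s, rfl⟩ := h
  rw [mul_comm, map_mul, ← mulVec_mulVec, hq, mulVec_zero]

end Krylov

section CyclicVector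

variable {K : Type*} [Field K] {n : ℕ}

lemma aeval_gcd_mulVec_eq_zero [DecidableEq K] {M : Matrix (Fin n) (Fin n) K} {v : Fin n → K}
    {q r : K[X]} (hq : aeval M q *ᵥ v = 0) (hr : aeval M r *ᵥ v = 0) :
    aeval M (EuclideanDomain.gcd q r) *ᵥ v = 0 := by
  rw [EuclideanDomain.gcd_eq_gcd_ab, map_add, add_mulVec,
    aeval_mulVec_eq_zero_of_dvd (dvd_mul_right _ _) hq,
    aeval_mulVec_eq_zero_of_dvd (dvd_mul_right _ _) hr, add_zero]

lemma exists_mem_normalizedFactors_dvd_div [DecidableEq K] {μ g : K[X]} (hμ : μ ≠ 0)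
    (hg : g ∣ μ) (hdeg : g.degree < μ.degree) : ∃ p ∈ normalizedFactors μ, g ∣ μ / p := by
  obtain ⟨h, rfl⟩ := hg
  have hg0 : g ≠ 0 := left_ne_zero_of_mul hμ
  have hh0 : h ≠ 0 := right_ne_zero_of_mul hμ
  have hhu : ¬IsUnit h := fun hu =>
    hdeg.ne (degree_eq_degree_of_associated (associated_mul_unit_left g h hu)).symm
  obtain ⟨p, hp⟩ := exists_mem_normalizedFactors hh0 hhu
  refine ⟨p, by rw [normalizedFactors_mul hg0 hh0]; exact Multiset.mem_add.mpr (Or.inr hp), ?_⟩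
  obtain ⟨h', rfl⟩ := dvd_of_mem_normalizedFactors hp
  rw [mul_left_comm, mul_div_cancel_left₀ _ (left_ne_zero_of_mul hh0)]
  exact dvd_mul_right _ _

lemma exists_isUnit_det_krylov [Infinite K] {M : Matrix (Fin n) (Fin n) K}
    (h : (minpoly K M).natDegree = n) : ∃ v, IsUnit (krylov M v).det := by
  classical
  set μ := minpoly K M
  have hμ : μ ≠ 0 := minpoly.ne_zero (Algebra.IsIntegral.isIntegral M)
  let W (p : (normalizedFactors μ).toFinset) : Submodule K (Fin n → K) :=
    LinearMap.ker (aeval M (μ / p.1)).mulVecLin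
  have hW (p) : W p ≠ ⊤ := by
    obtain ⟨p, hp⟩ := p
    intro htop
    have hp := Multiset.mem_toFinset.mp hp
    have hp0 : p ≠ 0 := ne_zero_of_mem_normalizedFactors hp
    have hkill : aeval M (μ / p) = 0 :=
      mulVec_injective (funext fun v => by
        simpa using LinearMap.congr_fun (LinearMap.ker_eq_top.mp htop) v)
    have hdiv0 : μ / p ≠ 0 := fun h0 => hμ <| by
      rw [← EuclideanDomain.mul_div_cancel' hp0 (dvd_of_mem_normalizedFactors hp), h0, mul_zero]
    exact (minpoly.degree_le_of_ne_zero K M hdiv0 hkill).not_gt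
      (degree_div_lt hμ (degree_pos_of_irreducible (irreducible_of_normalized_factor p hp)))
  -- A nonzero `q` of degree `< n` with `q(M) v = 0` would put `v` in some `W p` through
  -- `gcd q μ`, and over an infinite field `v` can avoid these finitely many proper subspaces.
  obtain ⟨v, hv⟩ : ∃ v, ∀ p, v ∉ W p := by
    by_contra! hcov
    obtain ⟨p, hp⟩ := Subspace.exists_eq_top_of_iUnion_eq_univ
      (Set.eq_univ_of_forall fun v => Set.mem_iUnion.mpr (hcov v))
    exact hW p hp
  refine ⟨v, isUnit_iff_ne_zero.mpr fun hdet => ?_⟩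
  obtain ⟨c, hc0, hc⟩ := exists_mulVec_eq_zero_iff.mpr hdet
  set q := ((degreeLTEquiv K n).symm c : K[X])
  have hq0 : q ≠ 0 := by simpa [q] using hc0
  have hqv : aeval M q *ᵥ v = 0 := by rw [← krylov_mulVec, hc]
  have hgv := aeval_gcd_mulVec_eq_zero hqv (r := μ) (by simp [μ, minpoly.aeval])
  have hgdeg : (EuclideanDomain.gcd q μ).degree < μ.degree := by
    refine (degree_le_of_dvd (EuclideanDomain.gcd_dvd_left _ _) hq0).trans_lt ?_
    rw [degree_eq_natDegree hμ, h]
    exact mem_degreeLT.mp ((degreeLTEquiv K n).symm c).2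
  obtain ⟨p, hp, hgp⟩ :=
    exists_mem_normalizedFactors_dvd_div hμ (EuclideanDomain.gcd_dvd_right _ _) hgdeg
  exact hv ⟨p, Multiset.mem_toFinset.mpr hp⟩ (aeval_mulVec_eq_zero_of_dvd hgp hgv)

lemma exists_mul_self_eq_zero_eventually_not_commute_conj (hn : 2 ≤ n)
    {M : Matrix (Fin n) (Fin n) K} {v : Fin n → K} (hv : IsUnit (krylov M v).det) :
    ∃ E : Matrix (Fin n) (Fin n) K, E * E = 0 ∧
      ∀ᶠ t : K in cofinite, ¬Commute M ((1 + t • E) * M * (1 - t • E)) := by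
  set W := (krylov M v)⁻¹
  let i₀ : Fin n := ⟨0, by omega⟩
  let i₁ : Fin n := ⟨1, by omega⟩
  have hi : i₁ ≠ i₀ := by simp [i₀, i₁, Fin.ext_iff]
  have hWv : W *ᵥ v = Pi.single i₀ 1 := by
    simpa only [i₀, pow_zero, one_mulVec] using inv_krylov_mulVec_pow hv i₀
  have hWMv : W *ᵥ (M *ᵥ v) = Pi.single i₁ 1 := by
    simpa only [i₁, pow_one] using inv_krylov_mulVec_pow hv i₁
  set E := vecMulVec v (W i₁)
  have hE (z : Fin n → K) : E *ᵥ z = (W *ᵥ z) i₁ • v := by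
    rw [vecMulVec_mulVec, op_smul_eq_smul]
    rfl
  have hEv : E *ᵥ v = 0 := by simp [hE, hWv, hi]
  have hEMv : E *ᵥ (M *ᵥ v) = v := by simp [hE, hWMv]
  refine ⟨E, mulVec_injective (funext fun z => ?_), ?_⟩
  · rw [← mulVec_mulVec, hE z, mulVec_smul, hEv, smul_zero, zero_mulVec]
  set γ := (W *ᵥ (M *ᵥ (M *ᵥ v))) i₁
  filter_upwards [eventually_cofinite_ne 0, eventually_cofinite_ne γ] with t ht₀ htγ hcomm
  set B := (1 + t • E) * M * (1 - t • E)
  have hB (z : Fin n → K) :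
      B *ᵥ z = M *ᵥ (z - t • E *ᵥ z) + t • E *ᵥ (M *ᵥ (z - t • E *ᵥ z)) := by
    simp only [B, ← mulVec_mulVec, add_mulVec, sub_mulVec, one_mulVec, smul_mulVec]
  have hBv : B *ᵥ v = M *ᵥ v + t • v := by rw [hB, hEv, smul_zero, sub_zero, hEMv]
  have hBMv : B *ᵥ (M *ᵥ v) = M *ᵥ (M *ᵥ v) - t • M *ᵥ v + (t * (γ - t)) • v := by
    rw [hB, hEMv, mulVec_sub, mulVec_smul, mulVec_sub, mulVec_smul, hE (M *ᵥ (M *ᵥ v)), hEMv]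
    module
  have hrel : (t * (t - γ)) • v + (2 * t) • (M *ᵥ v) = 0 := by
    have h : M *ᵥ (B *ᵥ v) = B *ᵥ (M *ᵥ v) := by rw [mulVec_mulVec, mulVec_mulVec, hcomm.eq]
    rw [hBv, hBMv, mulVec_add, mulVec_smul] at h
    linear_combination (norm := module) h
  have h₀ := congrArg (fun z => (W *ᵥ z) i₀) hrel
  simp [mulVec_add, mulVec_smul, hWv, hWMv, hi, ht₀, sub_eq_zero, htγ] at h₀

end CyclicVector

lemma FreeAlgebra.algHom_lift_apply {R X A B : Type*} [CommSemiring R] [Semiring A]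
    [Algebra R A] [Semiring B] [Algebra R B] (φ : A →ₐ[R] B) (f : X → A) (p : FreeAlgebra R X) :
    φ (lift R f p) = lift R (φ ∘ f) p := by
  rw [← AlgHom.comp_apply]
  congr 1
  exact hom_ext (by ext; simp)

lemma map_eval_conj_one_add_X_smul {K : Type*} [CommRing K] {n : ℕ}
    (E N : Matrix (Fin n) (Fin n) K) (t : K) :
    ((1 + (X : K[X]) • E.map C) * N.map C * (1 - (X : K[X]) • E.map C)).map (eval t) =
      (1 + t • E) * N * (1 - t • E) := by
  have hX : ((X : K[X]) • E.map C).map (eval t) = t • E := by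
    ext
    simpa using mul_comm _ _
  rw [← coe_evalRingHom, Matrix.map_mul, Matrix.map_mul]
  simp [Matrix.map_add, Matrix.map_sub, hX, Function.comp_def]

section Evaluation

variable {K : Type*} [Field K] {m n : ℕ}

lemma ncEval_map_eval (p : FreeAlgebra K (Fin m)) (A : Fin m → Matrix (Fin n) (Fin n) K[X])
    (t : K) : ncEval p (fun j => (A j).map (eval t)) = (FreeAlgebra.lift K A p).map (eval t) := by
  simpa [ncEval, Function.comp_def] using
    (FreeAlgebra.algHom_lift_apply (aeval t).mapMatrix A p).symm

lemma ncEval_conj {u u' : Matrix (Fin n) (Fin n) K} (h : u * u' = 1) (h' : u' * u = 1)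
    (p : FreeAlgebra K (Fin m)) (b : Fin m → Matrix (Fin n) (Fin n) K) :
    ncEval p (fun j => u * b j * u') = u * ncEval p b * u' := by
  simpa [ncEval, Function.comp_def, ConjAct.units_smul_def] using
    (FreeAlgebra.algHom_lift_apply
      (MulSemiringAction.toAlgHom K _ (ConjAct.toConjAct (⟨u, u', h, h'⟩ : _ˣ))) b p).symm

lemma eventually_commute_ncEval [Infinite K] {p : FreeAlgebra K (Fin m)}
    (H : ∀ i (a : Fin m → Matrix (Fin n) (Fin n) K) c,
      Commute (ncEval p a) (ncEval p (Function.update a i c)))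
    {A A' : Fin m → Matrix (Fin n) (Fin n) K[X]} {b : Fin m → Matrix (Fin n) (Fin n) K}
    (hA : ∀ j, (A j).map (eval 0) = b j) (hA' : ∀ j, (A' j).map (eval 0) = b j)
    {v : Fin n → K} (hv : IsUnit (krylov (ncEval p b) v).det) :
    ∀ᶠ t in cofinite,
      Commute (ncEval p fun j => (A j).map (eval t)) (ncEval p fun j => (A' j).map (eval t)) := by
  let Z (k : ℕ) (j : Fin m) : Matrix (Fin n) (Fin n) K[X] := if (j : ℕ) < k then A' j else A j
  let D (k : ℕ) : K[X] := (krylov (FreeAlgebra.lift K (Z k) p) (C ∘ v)).det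
  have hD (k : ℕ) (t : K) :
      (D k).eval t = (krylov (ncEval p fun j => (Z k j).map (eval t)) v).det := by
    rw [ncEval_map_eval, ← coe_evalRingHom, RingHom.map_det, RingHom.mapMatrix_apply, krylov_map]
    congr 2
    ext i
    simp
  have hD0 (k : ℕ) : D k ≠ 0 := by
    intro h0
    have hZ : (fun j => (Z k j).map (eval 0)) = b := funext fun j => by
      by_cases hj : (j : ℕ) < k <;> simp [Z, hj, hA, hA']
    have := hD k 0
    rw [h0, eval_zero, hZ] at this
    exact hv.ne_zero this.symm
  have hgen : ∀ᶠ t in cofinite, ∀ k ∈ Set.Iio m, (D k).eval t ≠ 0 :=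
    (eventually_all_finite (Set.finite_Iio m)).mpr fun k _ =>
      (finite_setOfPred_isRoot (hD0 k)).eventually_cofinite_notMem
  filter_upwards [hgen] with t ht
  have hZ0 : (fun j => (Z 0 j).map (eval t)) = fun j => (A j).map (eval t) := by simp [Z]
  have hZm : (fun j => (Z m j).map (eval t)) = fun j => (A' j).map (eval t) := by simp [Z]
  rw [← hZ0, ← hZm]
  refine commute_zero_of_commute_succ (Y := fun k => ncEval p fun j => (Z k j).map (eval t))
    (fun k hk => ⟨v, isUnit_iff_ne_zero.mpr (hD k t ▸ ht k hk)⟩) fun k hk => ?_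
  have hZk : (fun j => (Z (k + 1) j).map (eval t)) =
      Function.update (fun j => (Z k j).map (eval t)) ⟨k, hk⟩ ((A' ⟨k, hk⟩).map (eval t)) := by
    funext j
    by_cases hj : j = ⟨k, hk⟩
    · subst hj
      simp [Z]
    · have : (j : ℕ) ≠ k := fun h => hj (Fin.ext h)
      simp [Z, Function.update_of_ne hj, Nat.le_iff_lt_or_eq, this]
  simp only [hZk]
  exact H _ _ _

end Evaluation

/-- If a noncommutative polynomial `p` has an evaluation of degree `n` on `M_n(K)`
(`K` an infinite field, `n ≥ 2`), then there exist an index `i` and matrices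
`a_1,…,a_m, a_i'` such that the values of `p` at `(a_1,…,a_i,…,a_m)` and at
`(a_1,…,a_i',…,a_m)` do not commute. -/
theorem noncommuting_values_of_degree_n_evaluation
    {K : Type*} [Field K] [Infinite K] {m n : ℕ} (hn : 2 ≤ n)
    (p : FreeAlgebra K (Fin m))
    (hdeg : ∃ b : Fin m → Matrix (Fin n) (Fin n) K, (minpoly K (ncEval p b)).natDegree = n) :
    ∃ (i : Fin m) (a : Fin m → Matrix (Fin n) (Fin n) K) (a' : Matrix (Fin n) (Fin n) K),
      ¬ Commute (ncEval p a) (ncEval p (Function.update a i a')) := by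
  obtain ⟨b, hb⟩ := hdeg
  obtain ⟨v, hv⟩ := exists_isUnit_det_krylov hb
  obtain ⟨E, hE, hgeneric⟩ := exists_mul_self_eq_zero_eventually_not_commute_conj hn hv
  by_contra! H
  have hcomm := eventually_commute_ncEval H (A := fun j => (b j).map C)
    (A' := fun j => (1 + (X : K[X]) • E.map C) * (b j).map C * (1 - (X : K[X]) • E.map C))
    (fun j => by simp [Function.comp_def]) (fun j => by simp [map_eval_conj_one_add_X_smul]) hv
  obtain ⟨t, hcomm, hnot⟩ := (hcomm.and hgeneric).exists
  simp only [map_eval_conj_one_add_X_smul, Matrix.map_map, Function.comp_def, eval_C,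
    Matrix.map_id'] at hcomm
  rw [ncEval_conj (by simp [add_mul, mul_sub, hE]) (by simp [sub_mul, mul_add, hE])] at hcomm
  exact hnot hcomm
end

section
/- Let F be a field with char F ≠ 2 and let D be a finite-dimensional division algebra over F whose center is exactly F·1. Suppose V is a 2-dimensional F-linear subspace of D such that every nonzero v ∈ V is 2-central, i.e., v² ∈ F·1 but v ∉ F·1. Then D contains an F-central quaternion subalgebra: there exist u, w ∈ D with u² ∈ F·1, w² ∈ F·1, u ∉ F·1, w ∉ F·1, u·w ≠ 0, and u·w = −w·u, so that the F-subalgebra of D generated by u and w is 4-dimensional over F with center exactly F·1. -/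
/-!
Polarising the quadratic map `v ↦ v²` on `V` shows that the anticommutator `uv + vu` of any two
elements of `V` is a scalar, so Gram–Schmidt with respect to it turns a basis `u, v` of `V` into
an anticommuting pair `u, w`. These satisfy the relations of the quaternion algebra
`ℍ[F, u², 0, w²]`, whence an algebra map from it onto `F⟨u, w⟩`. The anticommutator with `u`
kills the `Fw ⊕ Fuw` part of a quaternion and doubles its `F ⊕ Fu` part, so, as `2 ≠ 0` and `D`
has no zero divisors, the map is injective; commuting with `i` and `j` in `ℍ[F, a, 0, b]` forces
an element into `F` when `2a ≠ 0`, so its centre is `F`.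
-/

open Quaternion

theorem eq_zero_of_eq_neg {R : Type*} [Ring R] [NoZeroDivisors R]
    (h2 : (2 : R) ≠ 0) {a : R} (h : a = -a) : a = 0 :=
  (mul_eq_zero.1 (by rw [two_mul]; nth_rewrite 1 [h]; exact neg_add_cancel a)).resolve_left h2

theorem eq_zero_of_algebraMap_add_smul_eq_zero {R A : Type*} [Field R] [Ring A] [Nontrivial A]
    [Algebra R A] {x : A} (hx : x ∉ (⊥ : Subalgebra R A)) {α β : R}
    (h : algebraMap R A α + β • x = 0) : α = 0 ∧ β = 0 := by
  obtain rfl : β = 0 := by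
    by_contra hβ
    refine hx (Algebra.mem_bot.2 ⟨-(β⁻¹ * α), ?_⟩)
    rw [map_neg, map_mul, ← Algebra.smul_def, ← smul_neg, ← eq_neg_of_add_eq_zero_right h,
      smul_smul, inv_mul_cancel₀ hβ, one_smul]
  simpa using h

theorem Submodule.exists_linearIndependent_pair_of_finrank_eq_two {K M : Type*} [DivisionRing K]
    [AddCommGroup M] [Module K M] {V : Submodule K M} (hV : Module.finrank K V = 2) :
    ∃ x ∈ V, ∃ y ∈ V, LinearIndependent K ![x, y] := by
  have : Module.Finite K V := Module.finite_of_finrank_eq_succ hV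
  let e := Module.finBasisOfFinrankEq K V hV
  refine ⟨e 0, (e 0).2, e 1, (e 1).2, ?_⟩
  have he : ![(e 0 : M), e 1] = V.subtype ∘ e := by ext i; fin_cases i <;> rfl
  rw [he]
  exact e.linearIndependent.map' V.subtype V.ker_subtype

theorem AlgHom.isCentral_range {R A B : Type*} [CommSemiring R] [Semiring A] [Semiring B]
    [Algebra R A] [Algebra R B] [Algebra.IsCentral R A] (f : A →ₐ[R] B)
    (hf : Function.Injective f) : Algebra.IsCentral R f.range where
  out x hx := by
    let e := AlgEquiv.ofInjective f hf
    obtain ⟨r, hr⟩ :=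
      Algebra.IsCentral.out (K := R) ((MulEquivClass.apply_mem_center_iff e.symm).2 hx)
    exact ⟨r, by simpa using congrArg e hr⟩

theorem AlgHom.finrank_range {R A B : Type*} [CommRing R] [Ring A] [Ring B]
    [Algebra R A] [Algebra R B] (f : A →ₐ[R] B)
    (hf : Function.Injective f) : Module.finrank R f.range = Module.finrank R A :=
  (AlgEquiv.ofInjective f hf).toLinearEquiv.finrank_eq.symm

section Anticommutator

variable {R A : Type*} [CommRing R] [Ring A] [Algebra R A]

theorem mul_add_mul_mem_bot_of_sq_mem_bot {x y : A} (hx : x ^ 2 ∈ (⊥ : Subalgebra R A))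
    (hy : y ^ 2 ∈ (⊥ : Subalgebra R A)) (hxy : (x + y) ^ 2 ∈ (⊥ : Subalgebra R A)) :
    x * y + y * x ∈ (⊥ : Subalgebra R A) := by
  have : x * y + y * x = (x + y) ^ 2 - x ^ 2 - y ^ 2 := by noncomm_ring
  rw [this]
  exact sub_mem (sub_mem hxy hx) hy

theorem mul_smul_sub_smul_eq_neg {u v : A} {a c : R} (hu : u * u = algebraMap R A a)
    (huv : u * v + v * u = algebraMap R A c) :
    u * ((2 * a) • v - c • u) = -(((2 * a) • v - c • u) * u) := by
  rw [eq_neg_iff_add_eq_zero]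
  calc u * ((2 * a) • v - c • u) + ((2 * a) • v - c • u) * u
      = (2 * a) • (u * v + v * u) - (2 * c) • (u * u) := by
        simp only [mul_sub, sub_mul, mul_smul_comm, smul_mul_assoc]
        module
    _ = 0 := by
      rw [huv, hu, Algebra.smul_def, Algebra.smul_def, ← map_mul, ← map_mul, mul_right_comm,
        sub_self]

end Anticommutator

namespace QuaternionAlgebra

theorem isCentral {R : Type*} [CommRing R] [NoZeroDivisors R] {c₁ c₃ : R}
    (h2 : (2 : R) ≠ 0) (hc₁ : c₁ ≠ 0) : Algebra.IsCentral R ℍ[R,c₁,0,c₃] where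
  out x hx := by
    have hi := (Subalgebra.mem_center_iff.1 hx) (Basis.self R).i
    have hj := (Subalgebra.mem_center_iff.1 hx) (Basis.self R).j
    have hJ : x.imJ = 0 := eq_zero_of_eq_neg h2 (by simpa using congrArg imK hi)
    have hK : c₁ * x.imK = 0 := eq_zero_of_eq_neg h2 (by simpa using congrArg imJ hi)
    have hI : x.imI = 0 := eq_zero_of_eq_neg h2 (by simpa [eq_comm] using congrArg imK hj)
    refine Algebra.mem_bot.2 ⟨x.re, ?_⟩
    ext <;> simp [hI, hJ, (mul_eq_zero.1 hK).resolve_left hc₁]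

namespace Basis

section Ring

variable {R A : Type*} [CommRing R] [Ring A] [Algebra R A]

def ofAnticomm {c₁ c₃ : R} (i j : A) (hi : i * i = c₁ • 1) (hj : j * j = c₃ • 1)
    (hij : i * j = -(j * i)) : Basis A c₁ 0 c₃ where
  i := i
  j := j
  k := i * j
  i_mul_i := by rw [hi, zero_smul, add_zero]
  j_mul_j := hj
  i_mul_j := rfl
  j_mul_i := by rw [hij, zero_smul, zero_sub, neg_neg]

theorem adjoin_i_j {c₁ c₂ c₃ : R} (q : Basis A c₁ c₂ c₃) :
    Algebra.adjoin R {q.i, q.j} = q.liftHom.range := by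
  rw [range_liftHom, ← i_mul_j]
  refine le_antisymm (Algebra.adjoin_mono (by simp [Set.insert_subset_insert])) ?_
  rw [Algebra.adjoin_le_iff]
  rintro x (rfl | rfl | rfl)
  · exact Algebra.subset_adjoin (by simp)
  · exact Algebra.subset_adjoin (by simp)
  · exact mul_mem (Algebra.subset_adjoin (by simp)) (Algebra.subset_adjoin (by simp))

end Ring

theorem liftHom_injective {R A : Type*} [Field R] [Ring A] [IsDomain A] [Algebra R A]
    {c₁ c₃ : R} (q : Basis A c₁ 0 c₃) (h2 : (2 : R) ≠ 0) (hi : q.i ∉ (⊥ : Subalgebra R A))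
    (hj : q.j ≠ 0) : Function.Injective q.liftHom := by
  have hc₁ : c₁ ≠ 0 := by
    rintro rfl
    exact hi (Algebra.mem_bot.2 ⟨0, by simpa using (mul_self_eq_zero.1 (by simp)).symm⟩)
  rw [injective_iff_map_eq_zero]
  intro x hx
  have hanticomm : (Basis.self R).i * x + x * (Basis.self R).i =
      algebraMap R _ (2 * c₁ * x.imI) + (2 * x.re) • (Basis.self R).i := by
    ext <;> simp <;> ring
  have hlift := congrArg q.liftHom hanticomm
  have hi_lift : q.liftHom (Basis.self R).i = q.i := by simp [lift]
  rw [map_add, map_mul, map_mul, hx, mul_zero, zero_mul, add_zero, map_add, AlgHom.commutes,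
    map_smul, hi_lift, eq_comm] at hlift
  obtain ⟨hI, hre⟩ := eq_zero_of_algebraMap_add_smul_eq_zero hi hlift
  have hI : x.imI = 0 := by simpa [h2, hc₁] using hI
  have hre : x.re = 0 := by simpa [h2] using hre
  have hjk : (algebraMap R A x.imJ + x.imK • q.i) * q.j = 0 := by
    rw [← hx]
    simp [lift, hI, hre, add_mul, Algebra.smul_def, mul_assoc]
  obtain ⟨hJ, hK⟩ :=
    eq_zero_of_algebraMap_add_smul_eq_zero hi ((mul_eq_zero.1 hjk).resolve_right hj)
  ext <;> simp [hre, hI, hJ, hK]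

end Basis

end QuaternionAlgebra

theorem exists_mul_eq_neg_mul_of_finrank_eq_two {F A : Type*} [Field F] [Ring A]
    [NoZeroDivisors A] [Algebra F A] (h2 : (2 : F) ≠ 0) {V : Submodule F A}
    (hV : Module.finrank F V = 2) (hsq : ∀ v ∈ V, v ^ 2 ∈ (⊥ : Subalgebra F A)) :
    ∃ u ∈ V, ∃ w ∈ V, u ≠ 0 ∧ w ≠ 0 ∧ u * w = -(w * u) := by
  obtain ⟨u, hu, v, hv, huv⟩ := V.exists_linearIndependent_pair_of_finrank_eq_two hV
  have hu0 : u ≠ 0 := huv.ne_zero 0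
  obtain ⟨a, ha⟩ := Algebra.mem_bot.1 (hsq u hu)
  obtain ⟨c, hc⟩ := Algebra.mem_bot.1 <|
    mul_add_mul_mem_bot_of_sq_mem_bot (hsq u hu) (hsq v hv) (hsq _ (V.add_mem hu hv))
  rw [pow_two] at ha
  have ha0 : a ≠ 0 := by
    rintro rfl
    exact hu0 (mul_self_eq_zero.1 (by simpa using ha.symm))
  refine ⟨u, hu, (2 * a) • v - c • u, V.sub_mem (V.smul_mem _ hv) (V.smul_mem _ hu), hu0, ?_,
    mul_smul_sub_smul_eq_neg ha.symm hc.symm⟩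
  intro hw
  have h2a := (LinearIndependent.pair_iff.1 huv (-c) (2 * a) (by rw [← hw]; module)).2
  exact mul_ne_zero h2 ha0 h2a

theorem finrank_adjoin_eq_four_and_center_eq_bot_of_mul_eq_neg_mul {F D : Type*} [Field F]
    [Ring D] [IsDomain D] [Algebra F D] (h2 : (2 : F) ≠ 0) {u w : D}
    (hu : u ^ 2 ∈ (⊥ : Subalgebra F D)) (hw : w ^ 2 ∈ (⊥ : Subalgebra F D))
    (hu1 : u ∉ (⊥ : Subalgebra F D)) (hw0 : w ≠ 0) (hanti : u * w = -(w * u)) :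
    Module.finrank F (Algebra.adjoin F {u, w} : Subalgebra F D) = 4 ∧
      Subalgebra.center F (Algebra.adjoin F {u, w} : Subalgebra F D) = ⊥ := by
  obtain ⟨a, ha⟩ := Algebra.mem_bot.1 hu
  obtain ⟨b, hb⟩ := Algebra.mem_bot.1 hw
  rw [Algebra.algebraMap_eq_smul_one, pow_two] at ha hb
  let q := QuaternionAlgebra.Basis.ofAnticomm u w ha.symm hb.symm hanti
  have hinj := q.liftHom_injective h2 hu1 hw0
  have ha0 : a ≠ 0 := by
    rintro rfl
    exact hu1 (by simp [mul_self_eq_zero.1 (ha.symm.trans (zero_smul F 1))])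
  have := QuaternionAlgebra.isCentral (c₃ := b) h2 ha0
  have := q.liftHom.isCentral_range hinj
  rw [show Algebra.adjoin F {u, w} = q.liftHom.range from q.adjoin_i_j,
    q.liftHom.finrank_range hinj, QuaternionAlgebra.finrank_eq_four]
  exact ⟨rfl, Algebra.IsCentral.center_eq_bot F _⟩

theorem central_quaternion_subalgebra_of_two_central_subspace_general
    {F D : Type*} [Field F] [DivisionRing D] [Algebra F D]
    (hchar : ringChar F ≠ 2)
    (V : Submodule F D) (hV : Module.finrank F V = 2)
    (h2c : ∀ v ∈ V, v ≠ 0 →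
      v ^ 2 ∈ (⊥ : Subalgebra F D) ∧ v ∉ (⊥ : Subalgebra F D)) :
    ∃ u w : D,
      u ^ 2 ∈ (⊥ : Subalgebra F D) ∧ w ^ 2 ∈ (⊥ : Subalgebra F D) ∧
      u ∉ (⊥ : Subalgebra F D) ∧ w ∉ (⊥ : Subalgebra F D) ∧
      u * w ≠ 0 ∧ u * w = -(w * u) ∧
      Module.finrank F (Algebra.adjoin F {u, w} : Subalgebra F D) = 4 ∧
      Subalgebra.center F (Algebra.adjoin F {u, w} : Subalgebra F D) = ⊥ := by
  have h2 : (2 : F) ≠ 0 := Ring.two_ne_zero hchar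
  have hsq : ∀ v ∈ V, v ^ 2 ∈ (⊥ : Subalgebra F D) := fun v hv => by
    rcases eq_or_ne v 0 with rfl | hv0
    · simp
    · exact (h2c v hv hv0).1
  obtain ⟨u, hu, w, hw, hu0, hw0, hanti⟩ := exists_mul_eq_neg_mul_of_finrank_eq_two h2 hV hsq
  obtain ⟨hu2, hu1⟩ := h2c u hu hu0
  obtain ⟨hw2, hw1⟩ := h2c w hw hw0
  exact ⟨u, w, hu2, hw2, hu1, hw1, mul_ne_zero hu0 hw0, hanti,
    finrank_adjoin_eq_four_and_center_eq_bot_of_mul_eq_neg_mul h2 hu2 hw2 hu1 hw0 hanti⟩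

/-- If `D` is a finite-dimensional central division algebra over a field `F` of
characteristic `≠ 2`, and `V ⊆ D` is a 2-dimensional `F`-subspace all of whose nonzero
elements are 2-central (`v² ∈ F·1` but `v ∉ F·1`), then `D` contains an `F`-central
quaternion subalgebra: anticommuting square-central elements `u, w ∉ F·1` with
`uw ≠ 0`, generating a 4-dimensional `F`-subalgebra whose center is exactly `F·1`. -/
theorem central_quaternion_subalgebra_of_two_central_subspace
    {F D : Type*} [Field F] [DivisionRing D] [Algebra F D] [FiniteDimensional F D]
    (hchar : ringChar F ≠ 2)
    (hcenter : Subalgebra.center F D = ⊥)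
    (V : Submodule F D) (hV : Module.finrank F V = 2)
    (h2c : ∀ v ∈ V, v ≠ 0 →
      v ^ 2 ∈ (⊥ : Subalgebra F D) ∧ v ∉ (⊥ : Subalgebra F D)) :
    ∃ u w : D,
      u ^ 2 ∈ (⊥ : Subalgebra F D) ∧ w ^ 2 ∈ (⊥ : Subalgebra F D) ∧
      u ∉ (⊥ : Subalgebra F D) ∧ w ∉ (⊥ : Subalgebra F D) ∧
      u * w ≠ 0 ∧ u * w = -(w * u) ∧
      Module.finrank F (Algebra.adjoin F {u, w} : Subalgebra F D) = 4 ∧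
      Subalgebra.center F (Algebra.adjoin F {u, w} : Subalgebra F D) = ⊥ :=
  central_quaternion_subalgebra_of_two_central_subspace_general hchar V hV h2c
end

section
/- Let F be a field with char F ≠ 2 and let D be a division algebra over F whose center is exactly F·1 and with dim_F D = n². If D contains a 2-dimensional F-linear subspace V such that every nonzero v ∈ V satisfies v² ∈ F·1 and v ∉ F·1, then n is even. -/
/-!
Polarising `v ↦ v²` shows that `u * v + v * u ∈ F` for `u, v ∈ V`, so one Gram–Schmidt step
inside `V` (possible since `2 ≠ 0` and `u² ≠ 0`) produces nonzero `u, w ∈ D` with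
`u * w = -(w * u)`. Applying the norm `N = N_{D/F}`, which is multiplicative with values in the
commutative field `F`, gives `N(u) N(w) = N(-1) N(w) N(u)`, hence `(-1) ^ dim D = N(-1) = 1`.
As `-1 ≠ 1` in `F`, `dim D = n²` is even, and so is `n`.
-/

open Module

theorem even_finrank_of_mul_eq_neg_mul {R S : Type*} [CommRing R] [Ring S] [Algebra R S]
    [Module.Free R S] (hR : (-1 : R) ≠ 1) {u w : S} (hu : IsUnit u) (hw : IsUnit w)
    (huw : u * w = -(w * u)) : Even (finrank R S) := by
  have hnorm : Algebra.norm R (-1 : S) = 1 := by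
    have h := congrArg (Algebra.norm R) huw
    rw [neg_eq_neg_one_mul, map_mul, map_mul, map_mul, mul_comm (Algebra.norm R w)] at h
    exact (((hu.map _).mul (hw.map _)).mul_eq_right).mp h.symm
  rw [← neg_one_pow_eq_one_iff_even hR, ← Algebra.norm_algebraMap (S := S), map_neg, map_one]
  exact hnorm

theorem mul_add_mul_mem_bot {R A : Type*} [CommRing R] [Ring A] [Algebra R A] {u v : A}
    (hu : u ^ 2 ∈ (⊥ : Subalgebra R A)) (hv : v ^ 2 ∈ (⊥ : Subalgebra R A))
    (huv : (u + v) ^ 2 ∈ (⊥ : Subalgebra R A)) : u * v + v * u ∈ (⊥ : Subalgebra R A) := by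
  rw [show u * v + v * u = (u + v) ^ 2 - u ^ 2 - v ^ 2 by noncomm_ring]
  exact sub_mem (sub_mem huv hu) hv

theorem mul_sub_smul_eq_neg_mul {F D : Type*} [Field F] [Ring D] [Algebra F D]
    (h2 : (2 : F) ≠ 0) {u v : D} {a c : F} (ha : a ≠ 0) (hu : u * u = algebraMap F D a)
    (huv : u * v + v * u = algebraMap F D c) :
    u * (v - (c / (2 * a)) • u) = -((v - (c / (2 * a)) • u) * u) := by
  set t := c / (2 * a) with ht
  apply eq_neg_of_add_eq_zero_left
  calc u * (v - t • u) + (v - t • u) * u = (u * v + v * u) - (2 * t) • (u * u) := by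
        rw [mul_sub, sub_mul, mul_smul_comm, smul_mul_assoc, mul_smul, two_smul]; abel
    _ = algebraMap F D (c - 2 * t * a) := by
        rw [huv, hu, Algebra.smul_def, ← map_mul, ← map_sub]
    _ = 0 := by
        rw [show c - 2 * t * a = 0 by rw [ht]; field_simp; ring, map_zero]

theorem exists_ne_zero_mul_eq_neg_mul {F D : Type*} [Field F] [DivisionRing D] [Algebra F D]
    (h2 : (2 : F) ≠ 0) {u v : D} (hli : LinearIndependent F ![u, v])
    (hu : u ^ 2 ∈ (⊥ : Subalgebra F D)) (hv : v ^ 2 ∈ (⊥ : Subalgebra F D))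
    (huv : (u + v) ^ 2 ∈ (⊥ : Subalgebra F D)) : ∃ w : D, w ≠ 0 ∧ u * w = -(w * u) := by
  obtain ⟨a, ha⟩ := Algebra.mem_bot.mp hu
  obtain ⟨c, hc⟩ := Algebra.mem_bot.mp (mul_add_mul_mem_bot hu hv huv)
  have hu0 : u ≠ 0 := hli.ne_zero 0
  have ha0 : a ≠ 0 := by
    rintro rfl
    exact pow_ne_zero 2 hu0 (by rw [← ha, map_zero])
  refine ⟨v - (c / (2 * a)) • u, fun h => ?_,
    mul_sub_smul_eq_neg_mul h2 ha0 (by rw [← sq, ha]) hc.symm⟩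
  have h' : (-(c / (2 * a))) • u + (1 : F) • v = 0 := by
    rw [← h, one_smul, neg_smul]; abel
  exact one_ne_zero (hli.eq_zero_of_pair h').2

theorem even_of_two_central_subspace_general
    {F D : Type*} [Field F] [DivisionRing D] [Algebra F D]
    (hchar : ringChar F ≠ 2)
    {n : ℕ} (hdim : Module.finrank F D = n ^ 2)
    (V : Submodule F D) (hV : Module.finrank F V = 2)
    (h2c : ∀ v ∈ V, v ≠ 0 →
      v ^ 2 ∈ (⊥ : Subalgebra F D) ∧ v ∉ (⊥ : Subalgebra F D)) :
    Even n := by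
  have hsq : ∀ v ∈ V, v ^ 2 ∈ (⊥ : Subalgebra F D) := by
    intro v hv
    rcases eq_or_ne v 0 with rfl | hv0
    · simp
    · exact (h2c v hv hv0).1
  have : Nontrivial V := Module.nontrivial_of_finrank_pos (R := F) (by omega)
  obtain ⟨x, hx⟩ := exists_ne (0 : V)
  obtain ⟨y, hxy⟩ := exists_linearIndependent_pair_of_one_lt_finrank (R := F) (by omega) hx
  have hli : LinearIndependent F ![(x : D), y] := by
    have h := hxy.map' V.subtype V.ker_subtype
    rwa [← FinVec.map_eq] at h
  obtain ⟨w, hw0, huw⟩ := exists_ne_zero_mul_eq_neg_mul (Ring.two_ne_zero hchar) hli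
    (hsq x x.2) (hsq y y.2) (hsq _ (V.add_mem x.2 y.2))
  have hD := even_finrank_of_mul_eq_neg_mul (Ring.neg_one_ne_one_of_char_ne_two hchar)
    (hli.ne_zero 0).isUnit hw0.isUnit huw
  rw [hdim] at hD
  exact (Nat.even_pow.mp hD).1

/-- If `D` is a central division algebra of dimension `n²` over a field `F` of
characteristic `≠ 2`, and `D` contains a 2-dimensional `F`-subspace all of whose
nonzero elements `v` satisfy `v² ∈ F·1` and `v ∉ F·1`, then `n` is even. -/
theorem even_of_two_central_subspace
    {F D : Type*} [Field F] [DivisionRing D] [Algebra F D]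
    (hchar : ringChar F ≠ 2)
    (hcenter : Subalgebra.center F D = ⊥)
    {n : ℕ} (hdim : Module.finrank F D = n ^ 2)
    (V : Submodule F D) (hV : Module.finrank F V = 2)
    (h2c : ∀ v ∈ V, v ≠ 0 →
      v ^ 2 ∈ (⊥ : Subalgebra F D) ∧ v ∉ (⊥ : Subalgebra F D)) :
    Even n :=
  even_of_two_central_subspace_general hchar hdim V hV h2c
end

section
/- Let D be a division ring with center F, let a, b, c, d ∈ D with b ≠ 0, and let α ∈ F. Then the 2×2 matrix A = [[a, b], [c, d]] over D satisfies A² = α·I if and only if c = −b⁻¹(a² − α) and d = −b⁻¹ a b. In particular, the square-central 2×2 matrices over D with nonzero upper-right entry are exactly the matrices [[a, b], [−b⁻¹(a² − α), −b⁻¹ a b]] with α ∈ F and a, b ∈ D, b ≠ 0. -/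
theorem Matrix.fin_two_sq_eq_scalar_iff {R : Type*} [Semiring R] (a b c d α : R) :
    !![a, b; c, d] ^ 2 = Matrix.scalar (Fin 2) α ↔
      a * a + b * c = α ∧ a * b + b * d = 0 ∧ c * a + d * c = 0 ∧ c * b + d * d = α := by
  rw [sq, Matrix.mul_fin_two, Matrix.scalar_apply, Matrix.diagonal_fin_two, ← Matrix.ext_iff]
  simp [Fin.forall_fin_two, and_assoc]

/-- Once the first row of `A²` is `(α, 0)`, left multiplication by `b` turns the second row
into `(α a - a α, α b)`; this is where centrality of `α` enters. -/
theorem Matrix.fin_two_sq_eq_scalar_iff_of_ne_zero {D : Type*} [DivisionRing D] {a b c d α : D}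
    (hb : b ≠ 0) (hα : α ∈ Subring.center D) :
    !![a, b; c, d] ^ 2 = Matrix.scalar (Fin 2) α ↔
      c = -(b⁻¹ * (a ^ 2 - α)) ∧ d = -(b⁻¹ * a * b) := by
  rw [Subring.mem_center_iff] at hα
  have hc : c = -(b⁻¹ * (a ^ 2 - α)) ↔ a * a + b * c = α := by
    rw [← mul_neg, eq_inv_mul_iff_mul_eq₀ hb, ← eq_sub_iff_add_eq', sq, neg_sub]
  have hd : d = -(b⁻¹ * a * b) ↔ a * b + b * d = 0 := by
    rw [mul_assoc, ← mul_neg, eq_inv_mul_iff_mul_eq₀ hb, eq_comm, neg_eq_iff_add_eq_zero]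
  rw [Matrix.fin_two_sq_eq_scalar_iff, hc, hd]
  refine ⟨fun h ↦ ⟨h.1, h.2.1⟩, fun ⟨h₀, h₁⟩ ↦ ⟨h₀, h₁, ?_, ?_⟩⟩ <;>
    have hbc : b * c = α - a * a := eq_sub_of_add_eq' h₀ <;>
    have hbd : b * d = -(a * b) := eq_neg_of_add_eq_zero_right h₁ <;>
    refine mul_left_cancel₀ hb ?_
  · calc b * (c * a + d * c) = (b * c) * a + (b * d) * c := by noncomm_ring
      _ = (α - a * a) * a + -(a * b) * c := by rw [hbc, hbd]
      _ = (α - a * a) * a - a * (b * c) := by noncomm_ring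
      _ = α * a - a * α := by rw [hbc]; noncomm_ring
      _ = b * 0 := by rw [hα a]; simp
  · calc b * (c * b + d * d) = (b * c) * b + (b * d) * d := by noncomm_ring
      _ = (α - a * a) * b + -(a * b) * d := by rw [hbc, hbd]
      _ = (α - a * a) * b - a * (b * d) := by noncomm_ring
      _ = α * b := by rw [hbd]; noncomm_ring
      _ = b * α := (hα b).symm

/-- Let `D` be a division ring with center `F`, let `a b c d ∈ D` with `b ≠ 0`, and let
`α ∈ F`.  The 2×2 matrix `A = [[a, b], [c, d]]` over `D` satisfies `A² = α·I` if and only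
if `c = -b⁻¹(a² - α)` and `d = -b⁻¹ a b`.  In particular, the square-central 2×2 matrices
over `D` with nonzero upper-right entry are exactly the matrices
`[[a, b], [-b⁻¹(a² - α), -b⁻¹ a b]]` with `α ∈ F`, `a, b ∈ D`, `b ≠ 0`. -/
theorem square_central_two_by_two_matrices
    {D : Type*} [DivisionRing D] (a b c d : D) (hb : b ≠ 0)
    (α : D) (hα : α ∈ Subring.center D) :
    ((!![a, b; c, d] : Matrix (Fin 2) (Fin 2) D) ^ 2 = Matrix.scalar (Fin 2) α ↔
      c = -(b⁻¹ * (a ^ 2 - α)) ∧ d = -(b⁻¹ * a * b)) ∧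
    {A : Matrix (Fin 2) (Fin 2) D |
        A 0 1 ≠ 0 ∧ ∃ β ∈ Subring.center D, A ^ 2 = Matrix.scalar (Fin 2) β} =
      {A : Matrix (Fin 2) (Fin 2) D |
        ∃ (a' b' β : D), β ∈ Subring.center D ∧ b' ≠ 0 ∧
          A = !![a', b'; -(b'⁻¹ * (a' ^ 2 - β)), -(b'⁻¹ * a' * b')]} := by
  refine ⟨Matrix.fin_two_sq_eq_scalar_iff_of_ne_zero hb hα, Set.ext fun A ↦ ⟨?_, ?_⟩⟩
  · rintro ⟨h01, β, hβ, hsq⟩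
    rw [Matrix.eta_fin_two A, Matrix.fin_two_sq_eq_scalar_iff_of_ne_zero h01 hβ] at hsq
    refine ⟨A 0 0, A 0 1, β, hβ, h01, ?_⟩
    rw [← hsq.1, ← hsq.2]
    exact Matrix.eta_fin_two A
  · rintro ⟨a', b', β, hβ, hb', rfl⟩
    exact ⟨by simpa using hb', β, hβ,
      (Matrix.fin_two_sq_eq_scalar_iff_of_ne_zero hb' hβ).mpr ⟨rfl, rfl⟩⟩
end

section
/- Let K be a field, let p be a multilinear polynomial in m variables over K, and let a_1,…,a_m be matrix units in M_n(K), i.e., a_k = e_{i_k j_k} is the matrix with 1 in position (i_k, j_k) and 0 elsewhere. Then p(a_1,…,a_m) is either a diagonal matrix or of the form α·e_{ij} for some α ∈ K and some indices i ≠ j. -/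
/-- The multilinear polynomial with coefficients `c : S_m → K`, evaluated at an
`m`-tuple of `n×n` matrices: `(A_1,…,A_m) ↦ Σ_{σ ∈ S_m} c_σ · A_{σ(1)} ⋯ A_{σ(m)}`. -/
noncomputable def mlEval {K : Type*} [Field K] {m n : ℕ}
    (c : Equiv.Perm (Fin m) → K) (A : Fin m → Matrix (Fin n) (Fin n) K) :
    Matrix (Fin n) (Fin n) K :=
  ∑ σ : Equiv.Perm (Fin m), c σ • (List.ofFn fun k => A (σ k)).prod

/-!
A product of matrix units `e_{i₁j₁} ⋯ e_{iₘjₘ}` is either zero or the matrix unit `e_{uv}`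
of a path from `u` to `v`; in the latter case the weight `∑ₖ (δ_{iₖ} - δ_{jₖ})` telescopes to
`δ_u - δ_v`. This weight does not depend on the order of the factors, so it is the same for
every monomial of `p(a₁, …, aₘ)`. If it equals `δ_u - δ_v` with `u ≠ v`, it determines `u` and
`v`, and every monomial is a multiple of `e_{uv}`; otherwise every nonzero monomial is some
`e_{uu}` (or the empty product `1`), and `p(a₁, …, aₘ)` is diagonal.
-/

open Matrix

section MatrixUnits

variable {ι R : Type*}

lemma isDiag_sum {α M : Type*} [AddCommMonoid M] (s : Finset α) {A : α → Matrix ι ι M}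
    (h : ∀ x ∈ s, (A x).IsDiag) : (∑ x ∈ s, A x).IsDiag :=
  Finset.sum_induction _ IsDiag (fun _ _ => IsDiag.add) isDiag_zero h

variable [DecidableEq ι]

def matrixUnit (R : Type*) [Zero R] [One R] (p : ι × ι) : Matrix ι ι R :=
  single p.1 p.2 1

def unitWeight (p : ι × ι) : ι → ℤ :=
  Pi.single p.1 1 - Pi.single p.2 1

lemma unitWeight_self (u : ι) : unitWeight (u, u) = 0 :=
  sub_self _

lemma unitWeight_add_unitWeight (u v w : ι) :
    unitWeight (u, v) + unitWeight (v, w) = unitWeight (u, w) := by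
  simp only [unitWeight]
  abel

lemma eq_of_unitWeight_eq {p q : ι × ι} (hp : p.1 ≠ p.2) (h : unitWeight p = unitWeight q) :
    p = q := by
  have h₁ := congrFun h p.1
  have h₂ := congrFun h p.2
  simp only [unitWeight, Pi.sub_apply, Pi.single_apply, if_neg hp,
    if_neg (Ne.symm hp)] at h₁ h₂
  obtain ⟨q₁, q₂⟩ := q
  ext <;> dsimp only at * <;> split_ifs at h₁ h₂ <;> simp_all

variable [Semiring R]

lemma exists_sum_smul_eq_single {α : Type*} (s : Finset α) (c : α → R)
    (M : α → Matrix ι ι R) {i j : ι} (hM : ∀ x ∈ s, M x = 0 ∨ M x = single i j 1) :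
    ∃ r, ∑ x ∈ s, c x • M x = single i j r := by
  refine Finset.sum_induction _ (fun N => ∃ r, N = single i j r)
    (fun _ _ ⟨r, hr⟩ ⟨r', hr'⟩ => ⟨r + r', by rw [hr, hr', single_add]⟩)
    ⟨0, (single_zero i j).symm⟩ fun x hx => ?_
  rcases hM x hx with h | h
  · exact ⟨0, by rw [h, smul_zero, single_zero]⟩
  · exact ⟨c x, by rw [h, smul_single, smul_eq_mul, mul_one]⟩

variable [Fintype ι]

lemma prod_matrixUnit_cons_eq_zero_or (p : ι × ι) (L : List (ι × ι)) :
    ((p :: L).map (matrixUnit R)).prod = 0 ∨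
      ∃ u v, ((p :: L).map (matrixUnit R)).prod = matrixUnit R (u, v) ∧
        ((p :: L).map unitWeight).sum = unitWeight (u, v) := by
  induction L generalizing p with
  | nil => exact .inr ⟨p.1, p.2, by simp, by simp⟩
  | cons q L ih =>
    simp only [List.map_cons, List.prod_cons, List.sum_cons] at ih ⊢
    rcases ih q with hzero | ⟨u, v, hprod, hweight⟩
    · exact .inl (by rw [hzero, mul_zero])
    rw [hprod, hweight]
    by_cases hpu : p.2 = u
    · subst hpu
      exact .inr ⟨p.1, v, by simp [matrixUnit], unitWeight_add_unitWeight _ _ _⟩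
    · exact .inl (single_mul_single_of_ne (h := hpu) ..)

lemma prod_matrixUnit_eq_zero_or_eq_of_sum_unitWeight {L : List (ι × ι)} {u v : ι}
    (huv : u ≠ v) (hweight : (L.map unitWeight).sum = unitWeight (u, v)) :
    (L.map (matrixUnit R)).prod = 0 ∨ (L.map (matrixUnit R)).prod = matrixUnit R (u, v) := by
  cases L with
  | nil =>
    have := eq_of_unitWeight_eq huv (hweight.symm.trans (unitWeight_self u).symm)
    exact (huv (congrArg Prod.snd this).symm).elim
  | cons p L =>
    rcases prod_matrixUnit_cons_eq_zero_or (R := R) p L with hzero | ⟨u', v', hprod, hweight'⟩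
    · exact .inl hzero
    · rw [hprod, eq_of_unitWeight_eq huv (hweight.symm.trans hweight')]
      exact .inr rfl

lemma isDiag_prod_matrixUnit_of_sum_unitWeight {L : List (ι × ι)}
    (hweight : ∀ u v, u ≠ v → (L.map unitWeight).sum ≠ unitWeight (u, v)) :
    (L.map (matrixUnit R)).prod.IsDiag := by
  cases L with
  | nil => exact isDiag_one
  | cons p L =>
    rcases prod_matrixUnit_cons_eq_zero_or (R := R) p L with hzero | ⟨u, v, hprod, hweight'⟩
    · rw [hzero]
      exact isDiag_zero
    · obtain rfl : u = v := by_contra fun huv => hweight u v huv hweight'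
      rw [hprod, matrixUnit, ← diagonal_single]
      exact isDiag_diagonal _

end MatrixUnits

/-- If each `a_k` is a matrix unit `e_{i_k j_k}`, then the value of a multilinear
polynomial at `(a_1,…,a_m)` is either a diagonal matrix or a scalar multiple `α·e_{ij}`
of a matrix unit with `i ≠ j`. -/
theorem mlEval_matrix_units_diag_or_offDiag_unit
    {K : Type*} [Field K] {m n : ℕ}
    (c : Equiv.Perm (Fin m) → K) (a : Fin m → Matrix (Fin n) (Fin n) K)
    (hunits : ∀ k : Fin m, ∃ i j : Fin n, a k = Matrix.single i j (1 : K)) :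
    (mlEval c a).IsDiag ∨
      ∃ (α : K) (i j : Fin n), i ≠ j ∧ mlEval c a = Matrix.single i j α := by
  choose I J hIJ using hunits
  obtain rfl : a = fun k => matrixUnit K (I k, J k) := funext hIJ
  set L : Equiv.Perm (Fin m) → List (Fin n × Fin n) :=
    fun σ => List.ofFn fun k => (I (σ k), J (σ k))
  have hmlEval : mlEval c (fun k => matrixUnit K (I k, J k)) =
      ∑ σ, c σ • ((L σ).map (matrixUnit K)).prod := by
    simp only [mlEval, L, List.map_ofFn, Function.comp_def]
  have hweight (σ : Equiv.Perm (Fin m)) :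
      ((L σ).map unitWeight).sum = ∑ k, unitWeight (I k, J k) := by
    simp only [L, List.map_ofFn, List.sum_ofFn, Function.comp_def]
    exact Equiv.sum_comp σ fun k => unitWeight (I k, J k)
  rw [hmlEval]
  by_cases hoff : ∃ u v, u ≠ v ∧ ∑ k, unitWeight (I k, J k) = unitWeight (u, v)
  · obtain ⟨u, v, huv, hw⟩ := hoff
    obtain ⟨r, hr⟩ := exists_sum_smul_eq_single Finset.univ c _ fun σ _ =>
      prod_matrixUnit_eq_zero_or_eq_of_sum_unitWeight huv ((hweight σ).trans hw)
    exact .inr ⟨r, u, v, huv, hr⟩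
  · push Not at hoff
    refine .inl (isDiag_sum _ fun σ _ => IsDiag.smul _ ?_)
    exact isDiag_prod_matrixUnit_of_sum_unitWeight fun u v huv =>
      (hweight σ).trans_ne (hoff u v huv)
end

section
/- Let K be an infinite field and let p be a multilinear polynomial in m variables over K that neither vanishes identically on M_n(K) nor takes only scalar values on M_n(K). Then there exist matrices a_1,…,a_m ∈ M_n(K) and a nonzero α ∈ K such that the characteristic polynomial of p(a_1,…,a_m) equals X^n − α; equivalently, the image of p contains a matrix whose eigenvalues (in an algebraic closure of K) are c, cε, cε², …, cε^{n−1} for some n-th root c of α, where ε is a primitive n-th root of unity when char K does not divide n. -/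
open Matrix Polynomial

section Multilinear

variable {K S S' : Type*} [CommSemiring K] [Semiring S] [Algebra K S] [Semiring S'] [Algebra K S']
  {m : ℕ}

noncomputable def mlMultilinearMap (c : Equiv.Perm (Fin m) → K) :
    MultilinearMap K (fun _ : Fin m => S) S :=
  ∑ σ, c σ • (MultilinearMap.mkPiAlgebraFin K m S).domDomCongr σ

theorem mlMultilinearMap_apply (c : Equiv.Perm (Fin m) → K) (A : Fin m → S) :
    mlMultilinearMap c A = ∑ σ, c σ • (List.ofFn fun k => A (σ k)).prod := by
  simp [mlMultilinearMap]

theorem AlgHom.map_mlMultilinearMap (φ : S →ₐ[K] S') (c : Equiv.Perm (Fin m) → K) (A : Fin m → S) :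
    φ (mlMultilinearMap c A) = mlMultilinearMap c (fun k => φ (A k)) := by
  simp only [mlMultilinearMap_apply, map_sum, map_smul, map_list_prod, List.map_ofFn]
  rfl

variable (S) in
noncomputable def mlValueSpan (c : Equiv.Perm (Fin m) → K) : Submodule K S :=
  Submodule.span K (Set.range (mlMultilinearMap c))

theorem mlMultilinearMap_mem_mlValueSpan (c : Equiv.Perm (Fin m) → K) (A : Fin m → S) :
    mlMultilinearMap c A ∈ mlValueSpan S c :=
  Submodule.subset_span ⟨A, rfl⟩

theorem AlgHom.map_mem_mlValueSpan (φ : S →ₐ[K] S) (c : Equiv.Perm (Fin m) → K) {x : S}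
    (hx : x ∈ mlValueSpan S c) : φ x ∈ mlValueSpan S c := by
  have : (mlValueSpan S c).map φ.toLinearMap ≤ mlValueSpan S c := by
    rw [mlValueSpan, Submodule.map_span, Submodule.span_le]
    rintro _ ⟨_, ⟨A, rfl⟩, rfl⟩
    exact Submodule.subset_span ⟨_, (φ.map_mlMultilinearMap c A).symm⟩
  exact this ⟨x, hx, rfl⟩

end Multilinear

theorem mlEval_eq_mlMultilinearMap {K : Type*} [Field K] {m n : ℕ} (c : Equiv.Perm (Fin m) → K)
    (A : Fin m → Matrix (Fin n) (Fin n) K) : mlEval c A = mlMultilinearMap c A :=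
  (mlMultilinearMap_apply c A).symm

section SquareZero

variable {K S : Type*} [Field K] [Infinite K] [Ring S] [Algebra K S]

theorem Submodule.mem_and_mem_of_forall_smul_sub_sq_smul_mem (L : Submodule K S) {a b : S}
    (h : ∀ t : K, t • a - t ^ 2 • b ∈ L) : a ∈ L ∧ b ∈ L := by
  classical
  obtain ⟨t, ht⟩ := Infinite.exists_notMem_finset ({0, 1} : Finset K)
  have ht₀ : t ≠ 0 := by rintro rfl; simp at ht
  have ht₁ : t - 1 ≠ 0 := sub_ne_zero.mpr (by rintro rfl; simp at ht)
  have hb : (t * (t - 1)) • b ∈ L := by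
    convert L.sub_mem (L.smul_mem t (h 1)) (h t) using 1
    module
  replace hb : b ∈ L := (L.smul_mem_iff (mul_ne_zero ht₀ ht₁)).mp hb
  exact ⟨by simpa using L.add_mem (h 1) hb, hb⟩

theorem Submodule.mul_sub_mul_mem_and_mul_mul_mem_of_mul_self_eq_zero (L : Submodule K S)
    (hL : ∀ φ : S ≃ₐ[K] S, ∀ x ∈ L, φ x ∈ L) {N x : S} (hN : N * N = 0) (hx : x ∈ L) :
    N * x - x * N ∈ L ∧ N * x * N ∈ L := by
  refine L.mem_and_mem_of_forall_smul_sub_sq_smul_mem fun t => ?_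
  let u : Sˣ := ⟨1 + t • N, 1 - t • N, by noncomm_ring; simp [hN], by noncomm_ring; simp [hN]⟩
  have hu := hL (MulSemiringAction.toAlgEquiv K S (ConjAct.toConjAct u)) x hx
  rw [MulSemiringAction.toAlgEquiv_apply, ConjAct.units_smul_def, ConjAct.ofConjAct_toConjAct]
    at hu
  convert L.sub_mem hu hx using 1
  simp only [u, Units.inv_mk]
  noncomm_ring
  module
end SquareZero

theorem Equiv.Perm.exists_apply_eq_and_apply_eq {ι : Type*} [DecidableEq ι] {i j a b : ι}
    (hij : i ≠ j) (hab : a ≠ b) : ∃ e : Equiv.Perm ι, e i = a ∧ e j = b := by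
  refine ⟨(Equiv.swap i a).trans (Equiv.swap (Equiv.swap i a j) b), ?_, by simp⟩
  have hj : Equiv.swap i a j ≠ a := fun h => hij (by simpa using congrArg (Equiv.swap i a) h.symm)
  simp only [Equiv.trans_apply, Equiv.swap_apply_left]
  exact Equiv.swap_apply_of_ne_of_ne hj.symm hab

section MatrixUnits

variable {K ι : Type*} [Field K] [Fintype ι] [DecidableEq ι]

theorem Matrix.single_mul_diagonal_sub_diagonal_mul_single (d : ι → K) (i j : ι) :
    single i j 1 * diagonal d - diagonal d * single i j 1 = (d j - d i) • single i j (1 : K) := by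
  ext a b
  by_cases ha : i = a <;> by_cases hb : j = b <;>
    simp [single, diagonal, mul_apply, ha, hb, eq_comm]

omit [Fintype ι] in
theorem Matrix.exists_diag_ne_of_forall_ne_smul_one {x : Matrix ι ι K}
    (hoff : ∀ i j, i ≠ j → x i j = 0) (hxs : ∀ a : K, x ≠ a • 1) :
    ∃ i j, i ≠ j ∧ x i i ≠ x j j := by
  rcases isEmpty_or_nonempty ι with _ | ⟨⟨i₀⟩⟩
  · exact (hxs 0 (Subsingleton.elim _ _)).elim
  by_contra! h
  refine hxs (x i₀ i₀) (ext fun i j => ?_)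
  rcases eq_or_ne i j with rfl | hij
  · rcases eq_or_ne i i₀ with rfl | hi
    · simp
    · simp [h i i₀ hi]
  · simp [hij, hoff i j hij]

theorem Submodule.exists_single_mem_of_forall_ne_smul_one [Infinite K]
    (L : Submodule K (Matrix ι ι K)) (hL : ∀ φ : Matrix ι ι K ≃ₐ[K] Matrix ι ι K, ∀ x ∈ L, φ x ∈ L)
    {x : Matrix ι ι K} (hx : x ∈ L) (hxs : ∀ a : K, x ≠ a • 1) :
    ∃ i j, i ≠ j ∧ single i j (1 : K) ∈ L := by
  by_cases hoff : ∃ i j, i ≠ j ∧ x i j ≠ 0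
  · obtain ⟨i, j, hij, hxij⟩ := hoff
    have h := (L.mul_sub_mul_mem_and_mul_mul_mem_of_mul_self_eq_zero hL
      (single_mul_single_of_ne (1 : K) j i j hij 1) hx).2
    rw [single_mul_mul_single, one_mul, mul_one, ← mul_one (x i j), ← smul_eq_mul, ← smul_single,
      L.smul_mem_iff hxij] at h
    exact ⟨j, i, hij.symm, h⟩
  · push Not at hoff
    obtain ⟨i, j, hij, hne⟩ := exists_diag_ne_of_forall_ne_smul_one hoff hxs
    have h := (L.mul_sub_mul_mem_and_mul_mul_mem_of_mul_self_eq_zero hL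
      (single_mul_single_of_ne (1 : K) i j i hij.symm 1) hx).1
    rw [← (isDiag_iff_diagonal_diag x).mp hoff, single_mul_diagonal_sub_diagonal_mul_single,
      L.smul_mem_iff (sub_ne_zero.mpr hne.symm : x.diag j - x.diag i ≠ 0)] at h
    exact ⟨i, j, hij, h⟩

theorem Submodule.single_mem_of_single_mem (L : Submodule K (Matrix ι ι K))
    (hL : ∀ φ : Matrix ι ι K ≃ₐ[K] Matrix ι ι K, ∀ x ∈ L, φ x ∈ L) {i j a b : ι} (hij : i ≠ j)
    (hab : a ≠ b) (h : single i j (1 : K) ∈ L) : single a b (1 : K) ∈ L := by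
  obtain ⟨e, hi, hj⟩ := Equiv.Perm.exists_apply_eq_and_apply_eq hij hab
  simpa [hi, hj] using hL (reindexAlgEquiv K K e) _ h
end MatrixUnits

open Fin.NatCast in
theorem Fin.forall_of_add_one {n : ℕ} [NeZero n] {P : Fin n → Prop} (h : ∀ i, P i → P (i + 1))
    {i₀ : Fin n} (h₀ : P i₀) (i : Fin n) : P i := by
  have hd : ∀ d : ℕ, P (i₀ + (d : Fin n)) := by
    intro d
    induction d with
    | zero => simpa using h₀
    | succ d ih => simpa [add_assoc] using h _ ih
  simpa using hd (i - i₀).val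

section CyclicGrading

variable {n : ℕ}

def Matrix.cyclicDiag {R : Type*} [Zero R] (g : Fin n) (y : Fin n → R) :
    Matrix (Fin n) (Fin n) R :=
  of fun i j => if j = i + g then y i else 0

theorem Matrix.cyclicDiag_map {R S : Type*} [Zero R] [Zero S] (g : Fin n) (y : Fin n → R)
    (f : R → S) (hf : f 0 = 0) : (cyclicDiag g y).map f = cyclicDiag g (fun i => f (y i)) := by
  ext i j
  simp only [cyclicDiag, map_apply, of_apply, apply_ite f, hf]

variable (R : Type*) [CommSemiring R]

def Matrix.cyclicGrade (g : Fin n) : Submodule R (Matrix (Fin n) (Fin n) R) where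
  carrier := {M | ∀ i j, j ≠ i + g → M i j = 0}
  add_mem' ha hb i j h := by simp [ha i j h, hb i j h]
  zero_mem' _ _ _ := rfl
  smul_mem' r M hM i j h := by simp [hM i j h]

instance [NeZero n] : SetLike.GradedMonoid (cyclicGrade R (n := n)) where
  one_mem i j h := one_apply_ne (by simpa using h.symm)
  mul_mem a b x y hx hy i j h := by
    rw [mul_apply]
    refine Finset.sum_eq_zero fun t _ => ?_
    by_cases ht : t = i + a
    · rw [hy t j (by rintro rfl; exact h (by rw [ht, add_assoc])), mul_zero]
    · rw [hx i t ht, zero_mul]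

variable {R}

theorem Matrix.cyclicDiag_mem (g : Fin n) (y : Fin n → R) : cyclicDiag g y ∈ cyclicGrade R g :=
  fun _ _ h => if_neg h

theorem Matrix.sum_cyclicDiag [NeZero n] (A : Matrix (Fin n) (Fin n) R) :
    ∑ g, cyclicDiag g (fun i => A i (i + g)) = A := by
  ext i j
  simp only [cyclicDiag, sum_apply, of_apply]
  rw [Fintype.sum_eq_single (j - i) fun g hg => if_neg ?_, if_pos (add_sub_cancel i j).symm,
    add_sub_cancel]
  rintro rfl
  exact hg (add_sub_cancel_left i g).symm

end CyclicGrading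

section GradedValues

variable {R : Type*} [CommSemiring R] {m n : ℕ}

theorem mlMultilinearMap_mem_cyclicGrade [NeZero n] (c : Equiv.Perm (Fin m) → R)
    {g : Fin m → Fin n} {A : Fin m → Matrix (Fin n) (Fin n) R}
    (hA : ∀ t, A t ∈ cyclicGrade R (g t)) : mlMultilinearMap c A ∈ cyclicGrade R (∑ t, g t) := by
  rw [mlMultilinearMap_apply]
  refine Submodule.sum_mem _ fun σ _ => Submodule.smul_mem _ _ ?_
  have h := SetLike.list_prod_ofFn_mem_graded (fun k => g (σ k)) (fun k => A (σ k)) fun k => hA _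
  rwa [List.sum_ofFn, Equiv.sum_comp σ g] at h

theorem mlMultilinearMap_eq_sum_cyclicDiag [NeZero n] (c : Equiv.Perm (Fin m) → R)
    (A : Fin m → Matrix (Fin n) (Fin n) R) :
    mlMultilinearMap c A =
      ∑ G : Fin m → Fin n,
        mlMultilinearMap c fun t => cyclicDiag (G t) fun i => A t i (i + G t) := by
  conv_lhs => rw [← funext fun t => sum_cyclicDiag (A t)]
  exact MultilinearMap.map_sum _ _

theorem exists_cyclicDiag_superdiag_ne_zero_of_mem_mlValueSpan [NeZero n]
    (c : Equiv.Perm (Fin m) → R) {x : Matrix (Fin n) (Fin n) R} (hx : x ∈ mlValueSpan _ c)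
    {i : Fin n} (hxi : x i (i + 1) ≠ 0) :
    ∃ g : Fin m → Fin n, ∑ t, g t = 1 ∧ ∃ y : Fin m → Fin n → R,
      (mlMultilinearMap c fun t => cyclicDiag (g t) (y t)) i (i + 1) ≠ 0 := by
  by_contra! h
  refine hxi (Submodule.span_le.mpr ?_ hx : x ∈ LinearMap.ker (entryLinearMap R R i (i + 1)))
  rintro _ ⟨A, rfl⟩
  change mlMultilinearMap c A i (i + 1) = 0
  rw [mlMultilinearMap_eq_sum_cyclicDiag, Matrix.sum_apply]
  refine Finset.sum_eq_zero fun G _ => ?_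
  by_cases hG : ∑ t, G t = 1
  · exact h G hG _
  · exact mlMultilinearMap_mem_cyclicGrade c (fun t => cyclicDiag_mem _ _) i (i + 1)
      fun h => hG (add_left_cancel h).symm

theorem mlMultilinearMap_cyclicDiag_apply_add_one [NeZero n] (c : Equiv.Perm (Fin m) → R)
    (g : Fin m → Fin n) (y : Fin m → Fin n → R) (i j : Fin n) :
    (mlMultilinearMap c fun t => cyclicDiag (g t) fun i => y t (i - 1)) (i + 1) (j + 1) =
      (mlMultilinearMap c fun t => cyclicDiag (g t) (y t)) i j := by
  have h := (reindexAlgEquiv R R (Equiv.subRight (1 : Fin n)).symm).toAlgHom.map_mlMultilinearMap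
    c fun t => cyclicDiag (g t) (y t)
  have hshift : ∀ t, (reindexAlgEquiv R R (Equiv.subRight (1 : Fin n)).symm)
      (cyclicDiag (g t) (y t)) = cyclicDiag (g t) fun i => y t (i - 1) := by
    intro t
    ext a b
    simp [cyclicDiag, sub_eq_iff_eq_add, sub_add_eq_add_sub]
  simp only [AlgEquiv.coe_toAlgHom, hshift] at h
  rw [← h]
  simp

end GradedValues

theorem MvPolynomial.exists_forall_eval_ne_zero {R σ ι : Type*} [CommRing R] [IsDomain R]
    [Infinite R] [Fintype ι] {P : ι → MvPolynomial σ R} (hP : ∀ i, P i ≠ 0) :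
    ∃ z, ∀ i, eval z (P i) ≠ 0 := by
  obtain ⟨z, hz⟩ : ∃ z, eval z (∏ i, P i) ≠ 0 := by
    by_contra! h
    exact Finset.prod_ne_zero_iff.mpr (fun i _ => hP i) (funext fun z => by rw [h z, map_zero])
  exact ⟨z, by simpa [Finset.prod_ne_zero_iff] using hz⟩

section Generic

variable {K : Type*} [Field K] {m n : ℕ}

noncomputable def genericCyclicValue (c : Equiv.Perm (Fin m) → K) (g : Fin m → Fin n) :
    Matrix (Fin n) (Fin n) (MvPolynomial (Fin m × Fin n) K) :=
  mlMultilinearMap c fun t => cyclicDiag (g t) fun i => MvPolynomial.X (t, i)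

theorem eval_genericCyclicValue (c : Equiv.Perm (Fin m) → K) (g : Fin m → Fin n)
    (y : Fin m → Fin n → K) (i j : Fin n) :
    MvPolynomial.eval (fun p => y p.1 p.2) (genericCyclicValue c g i j) =
      (mlMultilinearMap c fun t => cyclicDiag (g t) (y t)) i j := by
  have h := (MvPolynomial.aeval fun p : Fin m × Fin n => y p.1 p.2).mapMatrix.map_mlMultilinearMap
    c fun t => cyclicDiag (g t) fun i => MvPolynomial.X (t, i)
  simp only [AlgHom.mapMatrix_apply, cyclicDiag_map _ _ _ (map_zero _), MvPolynomial.aeval_X] at h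
  rw [← h]
  rfl

theorem exists_forall_cyclicDiag_superdiag_ne_zero [Infinite K] [NeZero n]
    (c : Equiv.Perm (Fin m) → K) (g : Fin m → Fin n)
    (h : ∃ i, ∃ y : Fin m → Fin n → K,
      (mlMultilinearMap c fun t => cyclicDiag (g t) (y t)) i (i + 1) ≠ 0) :
    ∃ y : Fin m → Fin n → K, ∀ i,
      (mlMultilinearMap c fun t => cyclicDiag (g t) (y t)) i (i + 1) ≠ 0 := by
  obtain ⟨i₀, h₀⟩ := h
  have hall : ∀ i, ∃ y : Fin m → Fin n → K,
      (mlMultilinearMap c fun t => cyclicDiag (g t) (y t)) i (i + 1) ≠ 0 := by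
    refine Fin.forall_of_add_one (fun i ⟨y, hy⟩ => ⟨fun t j => y t (j - 1), ?_⟩) h₀
    rwa [mlMultilinearMap_cyclicDiag_apply_add_one]
  obtain ⟨z, hz⟩ := MvPolynomial.exists_forall_eval_ne_zero
    (P := fun i => genericCyclicValue c g i (i + 1)) fun i hi => by
      obtain ⟨y, hy⟩ := hall i
      exact hy (by rw [← eval_genericCyclicValue, hi, map_zero])
  exact ⟨fun t i => z (t, i), fun i => by rw [← eval_genericCyclicValue]; exact hz i⟩

end Generic

theorem Equiv.Perm.eq_one_or_eq_subRight_one {n : ℕ} [NeZero n] (σ : Equiv.Perm (Fin n))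
    (h : ∀ i, σ i = i ∨ σ i = i - 1) : σ = 1 ∨ σ = Equiv.subRight 1 := by
  by_cases hfix : ∃ j, σ j = j
  · obtain ⟨j, hj⟩ := hfix
    refine Or.inl (Equiv.ext (Fin.forall_of_add_one (P := fun i => σ i = i) (fun i hi => ?_) hj))
    rcases h (i + 1) with h' | h'
    · exact h'
    · rw [add_sub_cancel_right] at h'
      rw [σ.injective (h'.trans hi.symm), hi]
  · push Not at hfix
    exact Or.inr (Equiv.ext fun i => (h i).resolve_left (hfix i))

theorem sign_subRight_one (k : ℕ) :
    Equiv.Perm.sign (Equiv.subRight (1 : Fin (k + 2))) = (-1) ^ (k + 1) := by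
  have : (Equiv.subRight (1 : Fin (k + 2)))⁻¹ = finRotate (k + 2) :=
    Equiv.ext fun i => by simp [Equiv.Perm.inv_def]
  rw [← Equiv.Perm.sign_inv, this, sign_finRotate]
  rfl

theorem Matrix.charpoly_of_mem_cyclicGrade_one {R : Type*} [CommRing R] {k : ℕ}
    {v : Matrix (Fin (k + 2)) (Fin (k + 2)) R} (hv : v ∈ cyclicGrade R 1) :
    v.charpoly = X ^ (k + 2) - C (∏ i, v i (i + 1)) := by
  have hne : ∀ i : Fin (k + 2), i - 1 ≠ i := fun i h => one_ne_zero (sub_eq_self.mp h)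
  -- Only the identity and the cycle `i ↦ i - 1` contribute to the Leibniz expansion.
  rw [charpoly, det_apply, Fintype.sum_eq_add 1 (Equiv.subRight 1) ?one_ne ?vanish]
  case one_ne =>
    intro h
    exact hne 0 (congrArg (· 0) h).symm
  case vanish =>
    rintro σ ⟨h1, hρ⟩
    obtain ⟨i, hi⟩ : ∃ i, σ i ≠ i ∧ σ i ≠ i - 1 := by
      by_contra! h
      exact (Equiv.Perm.eq_one_or_eq_subRight_one σ fun i => or_iff_not_imp_left.mpr (h i)).elim
        h1 hρ
    refine smul_eq_zero_of_right _ (Finset.prod_eq_zero (Finset.mem_univ i) ?_)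
    rw [charmatrix_apply_ne _ _ _ hi.1, hv _ _ fun h => hi.2 (eq_sub_of_add_eq h.symm),
      map_zero, neg_zero]
  have hdiag : ∀ i : Fin (k + 2), v i i = 0 :=
    fun i => hv i i fun h => hne (i + 1) (by rw [add_sub_cancel_right]; exact h)
  have hsub : ∀ i : Fin (k + 2), charmatrix v (i - 1) i = -C (v (i - 1) i) :=
    fun i => charmatrix_apply_ne _ _ _ (hne i)
  simp only [Equiv.Perm.sign_one, Equiv.Perm.coe_one, id_eq, one_smul, charmatrix_apply_eq,
    hdiag, map_zero, sub_zero, Finset.prod_const, Finset.card_univ, Fintype.card_fin,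
    Equiv.subRight_apply, hsub, sign_subRight_one]
  have hprod : ∏ i, v (i - 1) i = ∏ i, v i (i + 1) := by
    simpa using (Equiv.subRight (1 : Fin (k + 2))).prod_comp fun i => v i (i + 1)
  rw [Finset.prod_neg, ← map_prod, hprod, Finset.card_univ, Fintype.card_fin, Units.smul_def,
    zsmul_eq_mul]
  push_cast
  rw [← mul_assoc, ← pow_add, Odd.neg_one_pow ⟨k + 1, by ring⟩]
  ring

theorem Matrix.two_le_of_forall_ne_smul_one {K : Type*} [Field K] {n : ℕ}
    {A : Matrix (Fin n) (Fin n) K} (hA : ∀ a : K, A ≠ a • 1) : 2 ≤ n := by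
  by_contra! hn
  interval_cases n
  · exact hA 0 (Subsingleton.elim _ _)
  · exact hA (A 0 0) (by ext i j; fin_cases i; fin_cases j; simp)

theorem exists_value_with_charpoly_X_pow_sub_C_general
    {K : Type*} [Field K] [Infinite K] {m n : ℕ}
    (c : Equiv.Perm (Fin m) → K)
    (hns : ∃ A : Fin m → Matrix (Fin n) (Fin n) K,
      ∀ lam : K, mlEval c A ≠ lam • (1 : Matrix (Fin n) (Fin n) K)) :
    ∃ (A : Fin m → Matrix (Fin n) (Fin n) K) (α : K), α ≠ 0 ∧
      (mlEval c A).charpoly = Polynomial.X ^ n - Polynomial.C α := by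
  obtain ⟨A₀, hA₀⟩ := hns
  obtain ⟨k, rfl⟩ : ∃ k, n = k + 2 := Nat.exists_eq_add_of_le' (two_le_of_forall_ne_smul_one hA₀)
  set L := mlValueSpan (Matrix (Fin (k + 2)) (Fin (k + 2)) K) c
  have hL : ∀ φ : _ ≃ₐ[K] _, ∀ x ∈ L, φ x ∈ L :=
    fun φ _ hx => φ.toAlgHom.map_mem_mlValueSpan c hx
  obtain ⟨i, j, hij, hE⟩ := L.exists_single_mem_of_forall_ne_smul_one hL
    (mlMultilinearMap_mem_mlValueSpan c A₀) (by simpa only [mlEval_eq_mlMultilinearMap] using hA₀)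
  obtain ⟨g, hg, y₀, hy₀⟩ := exists_cyclicDiag_superdiag_ne_zero_of_mem_mlValueSpan c
    (L.single_mem_of_single_mem hL hij zero_ne_one hE) (i := 0) (by simp)
  obtain ⟨y, hy⟩ := exists_forall_cyclicDiag_superdiag_ne_zero c g ⟨0, y₀, hy₀⟩
  refine ⟨fun t => cyclicDiag (g t) (y t),
    ∏ i, (mlMultilinearMap c fun t => cyclicDiag (g t) (y t)) i (i + 1),
    Finset.prod_ne_zero_iff.mpr fun i _ => hy i, ?_⟩
  rw [mlEval_eq_mlMultilinearMap]
  exact charpoly_of_mem_cyclicGrade_one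
    (hg ▸ mlMultilinearMap_mem_cyclicGrade c fun t => cyclicDiag_mem _ _)

/-- If `K` is an infinite field and the multilinear polynomial `p` neither vanishes
identically on `M_n(K)` nor takes only scalar values on `M_n(K)`, then some value of `p`
has characteristic polynomial `Xⁿ - α` with `α ≠ 0` (so its eigenvalues in an algebraic
closure are `c, cε, …, cε^{n-1}` for an `n`-th root `c` of `α`). -/
theorem exists_value_with_charpoly_X_pow_sub_C
    {K : Type*} [Field K] [Infinite K] {m n : ℕ}
    (c : Equiv.Perm (Fin m) → K)
    (hnz : ∃ A : Fin m → Matrix (Fin n) (Fin n) K, mlEval c A ≠ 0)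
    (hns : ∃ A : Fin m → Matrix (Fin n) (Fin n) K,
      ∀ lam : K, mlEval c A ≠ lam • (1 : Matrix (Fin n) (Fin n) K)) :
    ∃ (A : Fin m → Matrix (Fin n) (Fin n) K) (α : K), α ≠ 0 ∧
      (mlEval c A).charpoly = Polynomial.X ^ n - Polynomial.C α :=
  exists_value_with_charpoly_X_pow_sub_C_general c hns
end
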